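/- With F(μ) = yᵀ(Σ_k μ_k K_k + λI)⁻¹ y + β‖μ‖² on the region {μ ∈ ℝ^p : μ ≥ 0}, the Hessian satisfies ∂²F/∂μ_j∂μ_k = 2αᵀK_k(K_μ + λI)⁻¹K_jα + 2βδ_{jk}, where K_μ = Σ_k μ_k K_k and α = (K_μ + λI)⁻¹y; consequently, for every u ∈ ℝ^p, uᵀ∇²F(μ)u = 2αᵀK_u(K_μ + λI)⁻¹K_uα + 2β‖u‖² ≥ 0, where K_u = Σ_k u_k K_k, so F is convex on the nonnegative orthant. -/

import Mathlib

/-!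
Write `A = Σ νᵢ Kᵢ + C`. Differentiating twice with `d(A⁻¹) = -A⁻¹ (dA) A⁻¹` gives the two
Hessian terms `yᵀ A⁻¹ Kₖ A⁻¹ Kⱼ A⁻¹ y` and `yᵀ A⁻¹ Kⱼ A⁻¹ Kₖ A⁻¹ y`; since `A⁻¹` and the `Kᵢ` are
symmetric, both equal `αᵀ Kₖ A⁻¹ Kⱼ α`. Summing against `uⱼ uₖ` yields `αᵀ K_u A⁻¹ K_u α`, which is
nonnegative because `A⁻¹` is positive semidefinite.

Convexity does not need the Hessian: for positive definite `M`,
`yᵀ M⁻¹ y = max_x (2 xᵀy - xᵀ M x)` (attained at `x = M⁻¹ y`) is a supremum of affine functions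
of `M`, hence convex on the positive definite cone, and `μ ↦ K_μ + λI` is affine and maps the
nonnegative orthant into that cone.
-/

open Matrix

section MatrixFractional

variable {n : Type*}

theorem convex_setOf_posDef [Fintype n] : Convex ℝ {M : Matrix n n ℝ | M.PosDef} := by
  intro M hM N hN a b ha hb hab
  rcases ha.eq_or_lt with rfl | ha
  · simpa [show b = 1 by linarith] using hN
  · exact (hM.smul ha).add_posSemidef (hN.posSemidef.smul hb)

variable [Fintype n] [DecidableEq n]

theorem Matrix.PosDef.two_mul_dotProduct_sub_le {M : Matrix n n ℝ} (hM : M.PosDef)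
    (x y : n → ℝ) : 2 * (x ⬝ᵥ y) - x ⬝ᵥ M *ᵥ x ≤ y ⬝ᵥ M⁻¹ *ᵥ y := by
  have hMx : M *ᵥ (M⁻¹ *ᵥ y) = y := by
    rw [mulVec_mulVec, mul_nonsing_inv _ hM.det_pos.ne'.isUnit, one_mulVec]
  have hswap : (M⁻¹ *ᵥ y) ⬝ᵥ M *ᵥ x = x ⬝ᵥ y := by
    rw [dotProduct_mulVec, ← mulVec_transpose, (isHermitian_iff_isSymm.mp hM.isHermitian).eq,
      hMx, dotProduct_comm]
  have h0 := hM.posSemidef.dotProduct_mulVec_nonneg (x - M⁻¹ *ᵥ y)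
  simp only [star_trivial, mulVec_sub, hMx, sub_dotProduct, dotProduct_sub, hswap] at h0
  rw [dotProduct_comm (M⁻¹ *ᵥ y) y] at h0
  linarith

theorem Matrix.PosDef.dotProduct_inv_mulVec_eq {M : Matrix n n ℝ} (hM : M.PosDef)
    (y : n → ℝ) :
    y ⬝ᵥ M⁻¹ *ᵥ y = 2 * ((M⁻¹ *ᵥ y) ⬝ᵥ y) - (M⁻¹ *ᵥ y) ⬝ᵥ M *ᵥ (M⁻¹ *ᵥ y) := by
  rw [mulVec_mulVec, mul_nonsing_inv _ hM.det_pos.ne'.isUnit, one_mulVec, dotProduct_comm]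
  ring

theorem convexOn_dotProduct_inv_mulVec (y : n → ℝ) :
    ConvexOn ℝ {M : Matrix n n ℝ | M.PosDef} (fun M => y ⬝ᵥ M⁻¹ *ᵥ y) := by
  refine ⟨convex_setOf_posDef, fun M hM N hN a b ha hb hab => ?_⟩
  set x := (a • M + b • N)⁻¹ *ᵥ y
  have hval := (convex_setOf_posDef hM hN ha hb hab).dotProduct_inv_mulVec_eq y
  simp only [smul_eq_mul]
  calc y ⬝ᵥ (a • M + b • N)⁻¹ *ᵥ y
      = a * (2 * (x ⬝ᵥ y) - x ⬝ᵥ M *ᵥ x) + b * (2 * (x ⬝ᵥ y) - x ⬝ᵥ N *ᵥ x) := by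
        rw [hval]
        simp only [add_mulVec, smul_mulVec, dotProduct_add, dotProduct_smul, smul_eq_mul]
        linear_combination (-(2 * (x ⬝ᵥ y))) * hab
    _ ≤ a * (y ⬝ᵥ M⁻¹ *ᵥ y) + b * (y ⬝ᵥ N⁻¹ *ᵥ y) := by
        gcongr
        · exact hM.two_mul_dotProduct_sub_le x y
        · exact hN.two_mul_dotProduct_sub_le x y

end MatrixFractional

section Symmetric

variable {ι n : Type*} [Fintype ι] [Fintype n]

theorem Matrix.IsSymm.dotProduct_mul_mul_mulVec {G : Matrix n n ℝ} (hG : G.IsSymm)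
    (M : Matrix n n ℝ) (y : n → ℝ) :
    y ⬝ᵥ (G * M * G) *ᵥ y = (G *ᵥ y) ⬝ᵥ M *ᵥ (G *ᵥ y) := by
  rw [← mulVec_mulVec, ← mulVec_mulVec, ← dotProduct_transpose_mulVec, hG.eq,
    dotProduct_comm]

theorem Matrix.dotProduct_mul_mul_mulVec_add_swap {A B G : Matrix n n ℝ} (hA : A.IsSymm)
    (hB : B.IsSymm) (hG : G.IsSymm) (y : n → ℝ) :
    y ⬝ᵥ (G * A * G * B * G) *ᵥ y + y ⬝ᵥ (G * B * G * A * G) *ᵥ y =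
      2 * ((G *ᵥ y) ⬝ᵥ (A * G * B) *ᵥ (G *ᵥ y)) := by
  have hswap : (G *ᵥ y) ⬝ᵥ (B * G * A) *ᵥ (G *ᵥ y) = (G *ᵥ y) ⬝ᵥ (A * G * B) *ᵥ (G *ᵥ y) := by
    rw [← dotProduct_transpose_mulVec, transpose_mul, transpose_mul, hA.eq, hB.eq, hG.eq,
      Matrix.mul_assoc]
  rw [show G * A * G * B * G = G * (A * G * B) * G by simp only [Matrix.mul_assoc],
    show G * B * G * A * G = G * (B * G * A) * G by simp only [Matrix.mul_assoc],
    hG.dotProduct_mul_mul_mulVec, hG.dotProduct_mul_mul_mulVec, hswap, two_mul]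

theorem Matrix.PosSemidef.dotProduct_mul_mul_mulVec_nonneg {G : Matrix n n ℝ}
    (hG : G.PosSemidef) {S : Matrix n n ℝ} (hS : S.IsSymm) (α : n → ℝ) :
    0 ≤ α ⬝ᵥ (S * G * S) *ᵥ α := by
  simpa [hS.eq] using (hG.conjTranspose_mul_mul_same S).dotProduct_mulVec_nonneg α

theorem sum_sum_mul_mul_hessian [DecidableEq ι] (K : ι → Matrix n n ℝ) (G : Matrix n n ℝ)
    (α : n → ℝ) (β : ℝ) (u : ι → ℝ) :
    ∑ j, ∑ k, u j * u k * (2 * (α ⬝ᵥ (K k * G * K j) *ᵥ α) + 2 * β * (if j = k then 1 else 0)) =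
      2 * (α ⬝ᵥ ((∑ i, u i • K i) * G * (∑ i, u i • K i)) *ᵥ α) + 2 * β * ∑ i, u i ^ 2 := by
  simp only [Finset.sum_mul, Finset.mul_sum, smul_mul_assoc, mul_smul_comm, sum_mulVec,
    smul_mulVec, dotProduct_sum, dotProduct_smul, smul_eq_mul, mul_add, Finset.sum_add_distrib,
    mul_ite, mul_one, mul_zero, Finset.sum_ite_eq, Finset.mem_univ, if_true]
  congr 1 <;> refine Finset.sum_congr rfl fun j _ => ?_
  · exact Finset.sum_congr rfl fun k _ => by ring
  · ring

end Symmetric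

section RingInverse

variable {𝕜 E R : Type*} [NontriviallyNormedField 𝕜] [NormedAddCommGroup E] [NormedSpace 𝕜 E]
  [NormedRing R] [NormedAlgebra 𝕜 R] [CompleteSpace R] {f : E → R} {f' : E →L[𝕜] R} {x : E}

theorem HasFDerivAt.ringInverse (hf : HasFDerivAt f f' x) (hx : IsUnit (f x)) :
    HasFDerivAt (fun x => Ring.inverse (f x))
      (-(ContinuousLinearMap.mulLeftRight 𝕜 R (Ring.inverse (f x)) (Ring.inverse (f x))) ∘L f')
      x := by
  obtain ⟨u, hu⟩ := hx
  have h := hasFDerivAt_ringInverse (𝕜 := 𝕜) u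
  rw [← Ring.inverse_unit, hu] at h
  exact h.comp x hf

end RingInverse

@[simp]
theorem IsBoundedLinearMap.toContinuousLinearMap_apply {𝕜 E F : Type*}
    [NontriviallyNormedField 𝕜] [SeminormedAddCommGroup E] [NormedSpace 𝕜 E]
    [SeminormedAddCommGroup F] [NormedSpace 𝕜 F] {f : E → F} (hf : IsBoundedLinearMap 𝕜 f)
    (x : E) : toContinuousLinearMap f hf x = f x := rfl

section Hessian

-- Only real-valued functions are differentiated in the end, so the choice of matrix norm is
-- immaterial; some complete normed-ring structure is needed to differentiate `Ring.inverse`.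
attribute [local instance] Matrix.linftyOpNormedRing Matrix.linftyOpNormedAlgebra

variable {ι n : Type*} [Fintype ι] [Fintype n] [DecidableEq n]

-- Stated via `IsBoundedLinearMap` because a `LinearMap.toContinuousLinearMap` would carry the
-- product topology of `Matrix`, only defeq to the norm topology, and `simp` could then not
-- evaluate the composed derivatives.
theorem Matrix.isBoundedLinearMap_dotProduct_mulVec (y : n → ℝ) :
    IsBoundedLinearMap ℝ fun M : Matrix n n ℝ => y ⬝ᵥ M *ᵥ y :=
  (IsBoundedLinearMap.isLinearMap_and_continuous_iff_isBoundedLinearMap _).mp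
    ⟨⟨fun M N => by simp [add_mulVec], fun c M => by simp [smul_mulVec]⟩, by fun_prop⟩

variable (K : ι → Matrix n n ℝ) (C : Matrix n n ℝ)

theorem hasFDerivAt_sum_smul_add (ν : ι → ℝ) :
    HasFDerivAt (fun ν : ι → ℝ => ∑ i, ν i • K i + C)
      (∑ i, (ContinuousLinearMap.proj (R := ℝ) i).smulRight (K i)) ν :=
  (HasFDerivAt.fun_sum fun i _ => (hasFDerivAt_apply i ν).smul_const (K i)).add_const C

theorem hasFDerivAt_inv_sum_smul_add {ν : ι → ℝ} (hν : IsUnit (∑ i, ν i • K i + C)) :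
    HasFDerivAt (fun ν : ι → ℝ => (∑ i, ν i • K i + C)⁻¹)
      (-(ContinuousLinearMap.mulLeftRight ℝ _ (∑ i, ν i • K i + C)⁻¹ (∑ i, ν i • K i + C)⁻¹) ∘L
        ∑ i, (ContinuousLinearMap.proj (R := ℝ) i).smulRight (K i)) ν := by
  simp only [nonsing_inv_eq_ringInverse]
  exact (hasFDerivAt_sum_smul_add K C ν).ringInverse hν

noncomputable def objective (y : n → ℝ) (β : ℝ) (ν : ι → ℝ) : ℝ :=
  y ⬝ᵥ (∑ i, ν i • K i + C)⁻¹ *ᵥ y + β * ∑ i, ν i ^ 2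

variable [DecidableEq ι] (y : n → ℝ) (β : ℝ)

theorem fderiv_objective_apply_single {ν : ι → ℝ} (hν : IsUnit (∑ i, ν i • K i + C)) (j : ι) :
    fderiv ℝ (objective K C y β) ν (Pi.single j 1) =
      -(y ⬝ᵥ ((∑ i, ν i • K i + C)⁻¹ * K j * (∑ i, ν i • K i + C)⁻¹) *ᵥ y) + 2 * β * ν j := by
  have hinv : HasFDerivAt (fun ν => y ⬝ᵥ (∑ i, ν i • K i + C)⁻¹ *ᵥ y) _ ν :=
    (isBoundedLinearMap_dotProduct_mulVec y).hasFDerivAt.comp ν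
      (hasFDerivAt_inv_sum_smul_add K C hν)
  have hsq := (HasFDerivAt.fun_sum (u := Finset.univ) fun i _ =>
    (hasFDerivAt_apply (𝕜 := ℝ) (F' := fun _ : ι => ℝ) i ν).pow 2).const_mul β
  unfold objective
  rw [(hinv.fun_add hsq).fderiv]
  simp [Pi.single_apply, Matrix.mul_assoc]
  ring

theorem fderiv_fderiv_objective_apply_single {μ : ι → ℝ} (hμ : IsUnit (∑ i, μ i • K i + C))
    (j k : ι) :
    fderiv ℝ (fun ν => fderiv ℝ (objective K C y β) ν (Pi.single j 1)) μ (Pi.single k 1) =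
      y ⬝ᵥ ((∑ i, μ i • K i + C)⁻¹ * K k * (∑ i, μ i • K i + C)⁻¹ * K j *
          (∑ i, μ i • K i + C)⁻¹) *ᵥ y +
        y ⬝ᵥ ((∑ i, μ i • K i + C)⁻¹ * K j * (∑ i, μ i • K i + C)⁻¹ * K k *
          (∑ i, μ i • K i + C)⁻¹) *ᵥ y +
        2 * β * (if j = k then 1 else 0) := by
  have hunit : ∀ᶠ ν in nhds μ, IsUnit (∑ i, ν i • K i + C) :=
    (hasFDerivAt_sum_smul_add K C μ).continuousAt.eventually_mem (Units.isOpen.mem_nhds hμ)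
  rw [Filter.EventuallyEq.fderiv_eq
    (hunit.mono fun ν hν => fderiv_objective_apply_single K C y β hν j)]
  have hinv := hasFDerivAt_inv_sum_smul_add K C hμ
  have hsandwich : HasFDerivAt
      (fun ν => y ⬝ᵥ ((∑ i, ν i • K i + C)⁻¹ * K j * (∑ i, ν i • K i + C)⁻¹) *ᵥ y) _ μ :=
    (isBoundedLinearMap_dotProduct_mulVec y).hasFDerivAt.comp μ
      ((hinv.mul_const' (K j)).fun_mul' hinv)
  rw [(hsandwich.fun_neg.fun_add ((hasFDerivAt_apply j μ).const_mul (2 * β))).fderiv]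
  simp [Pi.single_apply, Matrix.mul_assoc]

variable {K C}

theorem fderiv_fderiv_objective_apply_single_of_posDef (hK : ∀ i, (K i).IsSymm) {μ : ι → ℝ}
    (hμ : (∑ i, μ i • K i + C).PosDef) (j k : ι) :
    fderiv ℝ (fun ν => fderiv ℝ (objective K C y β) ν (Pi.single j 1)) μ (Pi.single k 1) =
      2 * (((∑ i, μ i • K i + C)⁻¹ *ᵥ y) ⬝ᵥ (K k * (∑ i, μ i • K i + C)⁻¹ * K j) *ᵥ
          ((∑ i, μ i • K i + C)⁻¹ *ᵥ y)) + 2 * β * (if j = k then 1 else 0) := by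
  rw [fderiv_fderiv_objective_apply_single K C y β hμ.isUnit, dotProduct_mul_mul_mulVec_add_swap
    (hK k) (hK j) (isHermitian_iff_isSymm.mp hμ.inv.isHermitian)]

end Hessian

section Convexity

variable {ι n : Type*} [Fintype ι]

theorem posDef_sum_smul_add {K : ι → Matrix n n ℝ} (hK : ∀ i, (K i).PosSemidef) {ν : ι → ℝ}
    (hν : 0 ≤ ν) {C : Matrix n n ℝ} (hC : C.PosDef) : (∑ i, ν i • K i + C).PosDef :=
  PosDef.posSemidef_add (posSemidef_sum _ fun i _ => (hK i).smul (hν i : 0 ≤ ν i)) hC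

theorem convexOn_univ_sum_sq : ConvexOn ℝ Set.univ fun ν : ι → ℝ => ∑ i, ν i ^ 2 := by
  refine ⟨convex_univ, fun ν _ ν' _ a b ha hb hab => ?_⟩
  simpa [Finset.sum_add_distrib, Finset.mul_sum] using Finset.sum_le_sum fun i _ =>
    (even_two.convexOn_pow (𝕜 := ℝ)).2 trivial trivial ha hb hab (x := ν i) (y := ν' i)

variable [Fintype n] [DecidableEq n]

theorem convexOn_dotProduct_inv_sum_smul_add {K : ι → Matrix n n ℝ}
    (hK : ∀ i, (K i).PosSemidef) {C : Matrix n n ℝ} (hC : C.PosDef) (y : n → ℝ) :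
    ConvexOn ℝ {ν : ι → ℝ | 0 ≤ ν} fun ν => y ⬝ᵥ (∑ i, ν i • K i + C)⁻¹ *ᵥ y := by
  let A : (ι → ℝ) →ᵃ[ℝ] Matrix n n ℝ :=
    (Fintype.linearCombination ℝ K).toAffineMap + AffineMap.const ℝ _ C
  exact ((convexOn_dotProduct_inv_mulVec y).comp_affineMap A).subset
    (fun _ hν => posDef_sum_smul_add hK hν hC) (convex_Ici 0)

theorem convexOn_objective {K : ι → Matrix n n ℝ} (hK : ∀ i, (K i).PosSemidef)
    {C : Matrix n n ℝ} (hC : C.PosDef) (y : n → ℝ) {β : ℝ} (hβ : 0 ≤ β) :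
    ConvexOn ℝ {ν : ι → ℝ | 0 ≤ ν} (objective K C y β) :=
  (convexOn_dotProduct_inv_sum_smul_add hK hC y).add
    ((convexOn_univ_sum_sq.smul hβ).subset (Set.subset_univ _) (convex_Ici 0))

end Convexity

/-- Hessian formula and convexity of
`F(μ) = yᵀ(Σ μ_k K_k + λI)⁻¹y + β‖μ‖²` on the nonnegative orthant. -/
theorem stmt3 {m p : ℕ} (y : Fin m → ℝ) (K : Fin p → Matrix (Fin m) (Fin m) ℝ)
    (hK : ∀ k, (K k).PosSemidef) (lam β : ℝ) (hlam : 0 < lam) (hβ : 0 < β) :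
    let F : (Fin p → ℝ) → ℝ := fun μ =>
      y ⬝ᵥ ((∑ i, μ i • K i) + lam • 1)⁻¹.mulVec y + β * ∑ i, μ i ^ 2
    ∀ μ : Fin p → ℝ, 0 ≤ μ →
      let α := ((∑ i, μ i • K i) + lam • 1)⁻¹.mulVec y
      (∀ j k : Fin p,
          fderiv ℝ (fun ν => fderiv ℝ F ν (Pi.single j 1)) μ (Pi.single k 1) =
            2 * (α ⬝ᵥ (K k * ((∑ i, μ i • K i) + lam • 1)⁻¹ * K j).mulVec α) +
              2 * β * (if j = k then 1 else 0)) ∧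
      (∀ u : Fin p → ℝ,
          (∑ j, ∑ k, u j * u k *
              fderiv ℝ (fun ν => fderiv ℝ F ν (Pi.single j 1)) μ (Pi.single k 1)) =
            2 * (α ⬝ᵥ ((∑ i, u i • K i) * ((∑ i, μ i • K i) + lam • 1)⁻¹ *
                (∑ i, u i • K i)).mulVec α) + 2 * β * ∑ i, u i ^ 2 ∧
          0 ≤ 2 * (α ⬝ᵥ ((∑ i, u i • K i) * ((∑ i, μ i • K i) + lam • 1)⁻¹ *
                (∑ i, u i • K i)).mulVec α) + 2 * β * ∑ i, u i ^ 2) ∧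
      ConvexOn ℝ {ν : Fin p → ℝ | 0 ≤ ν} F := by
  intro F μ hμ α
  have hF : F = objective K (lam • 1) y β := rfl
  have hC : (lam • 1 : Matrix (Fin m) (Fin m) ℝ).PosDef := PosDef.one.smul hlam
  have hA := posDef_sum_smul_add hK hμ hC
  have hKsymm : ∀ i, (K i).IsSymm := fun i => isHermitian_iff_isSymm.mp (hK i).isHermitian
  have hessian := fderiv_fderiv_objective_apply_single_of_posDef y β hKsymm hA
  simp only [hF]
  refine ⟨hessian, fun u => ⟨?_, ?_⟩, convexOn_objective hK hC y hβ.le⟩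
  · simp only [hessian]
    exact sum_sum_mul_mul_hessian K _ α β u
  · have hKu : (∑ i, u i • K i).IsSymm := by
      simp only [IsSymm, transpose_sum, transpose_smul, (hKsymm _).eq]
    have := hA.inv.posSemidef.dotProduct_mul_mul_mulVec_nonneg hKu α
    positivity
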